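/- Let k ≥ 1 and m ≥ 2k be integers, and let φ^μ be an irreducible unitary representation of S(m) with m_μ ≠ 0 on (ℂ^d)^{⊗m}. Then the partial trace of its Young projector over the last k tensor factors satisfies tr_{m−k+1,…,m} P_μ = Σ_β m_{μ/β}·(m_μ/m_β)·P_β, the sum running over the isomorphism classes of irreducible representations β of S(m−k) occurring in the restriction of μ to S(m−k) (each of which automatically has m_β ≠ 0), where m_{μ/β} is the multiplicity of β in that restriction (equivalently, the number of paths in the Young branching from μ down to β). -/

import Mathlib

open scoped BigOperators
open scoped Classical
open scoped ComplexOrder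
open Matrix

noncomputable section

/-- Square matrices on the computational basis of `(ℂ^d)^{⊗ n}`. -/
abbrev Mat (d n : ℕ) := Matrix (Fin n → Fin d) (Fin n → Fin d) ℂ

/-- The unitary permuting the tensor factors according to `σ`. -/
def Vperm (d n : ℕ) (σ : Equiv.Perm (Fin n)) : Mat d n :=
  Matrix.of fun f g => if f ∘ σ = g then (1 : ℂ) else 0

/-- Orthogonal projector onto the maximally entangled state of factors `r` and `s`,
tensored with the identity on the remaining factors. -/
def Pplus (d n : ℕ) (r s : Fin n) : Mat d n :=
  Matrix.of fun f g =>
    if f r = f s ∧ g r = g s ∧ ∀ t : Fin n, t ≠ r → t ≠ s → f t = g t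
    then (1 : ℂ) / d else 0

/-- `V^{(k)} = d^k · P⁺_{n-2k+1,n} ⋯ P⁺_{n-k,n-k+1}` on `n = a + 2k` factors
(`a = n - 2k`), tensored with the identity on the remaining factors. -/
def Vk (d a k : ℕ) : Mat d (a + k + k) :=
  ((d : ℂ) ^ k) •
    ((List.finRange k).map fun j : Fin k =>
      Pplus d (a + k + k) ⟨a + (j : ℕ), by have := j.isLt; omega⟩
        ⟨a + k + k - 1 - (j : ℕ), by have := j.isLt; omega⟩).prod

/-- Extension of an operator on the first `m` factors by the identity on the rest. -/
def extOp {d m n : ℕ} (h : m ≤ n) (X : Mat d m) : Mat d n :=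
  Matrix.of fun f g =>
    if ∀ i : Fin n, m ≤ (i : ℕ) → f i = g i
    then X (fun i => f (Fin.castLE h i)) (fun i => g (Fin.castLE h i)) else 0

def splice {d a b : ℕ} (f : Fin a → Fin d) (t : Fin b → Fin d) : Fin (a + b) → Fin d :=
  fun i => if h : (i : ℕ) < a then f ⟨i, h⟩ else t ⟨(i : ℕ) - a, by have := i.isLt; omega⟩

/-- Partial trace over the last `b` tensor factors. -/
def ptraceLast {d : ℕ} (a b : ℕ) (X : Mat d (a + b)) : Mat d a :=
  Matrix.of fun f g => ∑ t : Fin b → Fin d, X (splice f t) (splice g t)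

def finLtEquiv {m n : ℕ} (h : m ≤ n) : Fin m ≃ {i : Fin n // (i : ℕ) < m} where
  toFun i := ⟨⟨(i : ℕ), lt_of_lt_of_le i.isLt h⟩, i.isLt⟩
  invFun j := ⟨(j.1 : ℕ), j.2⟩
  left_inv i := rfl
  right_inv j := rfl

/-- The embedding of `S(m)` into `S(n)`, acting on the first `m` letters. -/
def permExt {m n : ℕ} (h : m ≤ n) (σ : Equiv.Perm (Fin m)) : Equiv.Perm (Fin n) :=
  σ.extendDomain (finLtEquiv h)

/-- A unitary irreducible matrix representation (Schur's criterion). -/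
def IsUnitaryIrrep {G : Type*} [Group G] {e : ℕ}
    (φ : G →* Matrix (Fin e) (Fin e) ℂ) : Prop :=
  (∀ g, (φ g)ᴴ * φ g = 1) ∧
  ∀ X : Matrix (Fin e) (Fin e) ℂ, (∀ g, X * φ g = φ g * X) →
    ∃ c : ℂ, X = c • (1 : Matrix (Fin e) (Fin e) ℂ)

/-- Operator basis `E^μ_{ij} = (d_μ/m!) Σ_τ φ^μ_{ji}(τ⁻¹) V_τ` on the first `m` factors. -/
def Eop (d m : ℕ) {e : ℕ} (φ : Equiv.Perm (Fin m) →* Matrix (Fin e) (Fin e) ℂ)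
    (i j : Fin e) : Mat d m :=
  ((e : ℂ) / (Nat.factorial m : ℂ)) •
    ∑ τ : Equiv.Perm (Fin m), φ τ⁻¹ j i • Vperm d m τ

/-- Young projector `P_μ = Σ_i E^μ_{ii}`. -/
def Pop (d m : ℕ) {e : ℕ} (φ : Equiv.Perm (Fin m) →* Matrix (Fin e) (Fin e) ℂ) : Mat d m :=
  ∑ i : Fin e, Eop d m φ i i

/-- Schur–Weyl multiplicity `m_μ = tr(P_μ)/d_μ` (a real number). -/
def multSW (d m : ℕ) {e : ℕ} (φ : Equiv.Perm (Fin m) →* Matrix (Fin e) (Fin e) ℂ) : ℝ :=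
  (Matrix.trace (Pop d m φ)).re / (e : ℝ)

/-- A family of concrete unitary irreducible matrix representations of `S(a)`. -/
structure IrrepFamily (a : ℕ) where
  Label : Type
  [instFintype : Fintype Label]
  [instDecEq : DecidableEq Label]
  dim : Label → ℕ
  dim_pos : ∀ ℓ, 0 < dim ℓ
  rep : ∀ ℓ, Equiv.Perm (Fin a) →* Matrix (Fin (dim ℓ)) (Fin (dim ℓ)) ℂ
  irrep : ∀ ℓ, IsUnitaryIrrep (rep ℓ)

attribute [instance] IrrepFamily.instFintype IrrepFamily.instDecEq

/-- An irreducible unitary representation of `S(a+k)` in PRIR form relative to the chain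
`S(a+k) ⊃ ⋯ ⊃ S(a)`: the restriction to `S(a)` is block diagonal, the blocks being
indexed by branching paths, the block of every path ending at the irrep `α` of `S(a)`
being one and the same fixed matrix irrep `Φ.rep α`. -/
structure PRIRData (a k : ℕ) (Φ : IrrepFamily a) (e : ℕ) where
  rep : Equiv.Perm (Fin (a + k)) →* Matrix (Fin e) (Fin e) ℂ
  irrep : IsUnitaryIrrep rep
  Path : Type
  [instFintypePath : Fintype Path]
  [instDecEqPath : DecidableEq Path]
  endOf : Path → Φ.Label
  basis : ((r : Path) × Fin (Φ.dim (endOf r))) ≃ Fin e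
  block_diag : ∀ (h : Equiv.Perm (Fin a)) (r : Path) (l l' : Fin (Φ.dim (endOf r))),
      rep (permExt (Nat.le_add_right a k) h) (basis ⟨r, l⟩) (basis ⟨r, l'⟩)
        = Φ.rep (endOf r) h l l'
  block_off : ∀ (h : Equiv.Perm (Fin a)) (r r' : Path), r ≠ r' →
      ∀ (l : Fin (Φ.dim (endOf r))) (l' : Fin (Φ.dim (endOf r'))),
      rep (permExt (Nat.le_add_right a k) h) (basis ⟨r, l⟩) (basis ⟨r', l'⟩) = 0

attribute [instance] PRIRData.instFintypePath PRIRData.instDecEqPath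

/-- The number of paths `m_{μ/α}`, i.e. the multiplicity of `α` in the restriction. -/
def PRIRData.pathMult {a k : ℕ} {Φ : IrrepFamily a} {e : ℕ}
    (P : PRIRData a k Φ e) (α : Φ.Label) : ℕ :=
  Fintype.card {r : P.Path // P.endOf r = α}

/-- The basis operators
`F^{r_{μ/α} r_{ν/α}}_{i_μ j_ν} = (m_α/√(m_μ m_ν)) E^μ_{i_μ,(r,1_α)} V^{(k)} E^ν_{(s,1_α),j_ν}`. -/
def Fop (d a k : ℕ) (Φ : IrrepFamily a) {e e' : ℕ}
    (P : PRIRData a k Φ e) (Q : PRIRData a k Φ e')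
    (r : P.Path) (s : Q.Path) (i : Fin e) (j : Fin e') : Mat d (a + k + k) :=
  ((multSW d a (Φ.rep (P.endOf r)) /
      Real.sqrt (multSW d (a + k) P.rep * multSW d (a + k) Q.rep) : ℝ) : ℂ) •
    (extOp (Nat.le_add_right (a + k) k)
        (Eop d (a + k) P.rep i (P.basis ⟨r, ⟨0, Φ.dim_pos _⟩⟩)) *
      Vk d a k *
      extOp (Nat.le_add_right (a + k) k)
        (Eop d (a + k) Q.rep (Q.basis ⟨s, ⟨0, Φ.dim_pos _⟩⟩) j))

/-- The projectors `F_μ(α) = Σ_{r_{μ/α}} Σ_{k_μ} F^{r r}_{k k}`. -/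
def Fproj (d a k : ℕ) (Φ : IrrepFamily a) {e : ℕ}
    (P : PRIRData a k Φ e) (α : Φ.Label) : Mat d (a + k + k) :=
  ∑ r : {r : P.Path // P.endOf r = α}, ∑ i : Fin e, Fop d a k Φ P P r.1 r.1 i i

/-- Eigenvalues `λ_μ(α) = (k!·C(N,k)/d^N)·(m_μ d_α)/(m_α d_μ)` of the MPBT operator. -/
def lambdaEig (d a k : ℕ) (Φ : IrrepFamily a) {e : ℕ}
    (P : PRIRData a k Φ e) (α : Φ.Label) : ℝ :=
  ((Nat.factorial k * Nat.choose (a + k) k : ℝ) / (d : ℝ) ^ (a + k)) *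
    (multSW d (a + k) P.rep * (Φ.dim α : ℝ)) / (multSW d a (Φ.rep α) * (e : ℝ))

/-- A family of irreps of `S(a+k)` in PRIR form relative to `Φ`, one chosen
representative for each isomorphism class (pairwise non-isomorphic and complete). -/
structure PRIRFamily (a k : ℕ) (Φ : IrrepFamily a) where
  Label : Type
  [instFintype : Fintype Label]
  [instDecEq : DecidableEq Label]
  dim : Label → ℕ
  prir : ∀ ℓ, PRIRData a k Φ (dim ℓ)
  noniso : ∀ ℓ ℓ', ℓ ≠ ℓ' → ∀ T : Matrix (Fin (dim ℓ)) (Fin (dim ℓ')) ℂ,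
      (∀ σ, (prir ℓ).rep σ * T = T * (prir ℓ').rep σ) → T = 0
  complete : ∀ (e : ℕ) (ψ : Equiv.Perm (Fin (a + k)) →* Matrix (Fin e) (Fin e) ℂ),
      IsUnitaryIrrep ψ → ∃ ℓ, ∃ T : Matrix (Fin (dim ℓ)) (Fin e) ℂ,
        ∃ T' : Matrix (Fin e) (Fin (dim ℓ)) ℂ,
          T * T' = 1 ∧ T' * T = 1 ∧ ∀ σ, (prir ℓ).rep σ * T = T * ψ σ

attribute [instance] PRIRFamily.instFintype PRIRFamily.instDecEq

/-- The signal states `σ_i` of the MPBT scheme, for a tuple `v` of (distinct) ports: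
the ports are factors `0,…,a+k-1` and `B̃_j` (resp. `C_j`) is factor `a+k+j`. -/
def sigmaOp (d a k : ℕ) (v : Fin k → Fin (a + k)) : Mat d (a + k + k) :=
  ((1 : ℂ) / (d : ℂ) ^ a) •
    ((List.finRange k).map fun j : Fin k =>
      Pplus d (a + k + k) (Fin.castLE (Nat.le_add_right (a + k) k) (v j))
        ⟨a + k + (j : ℕ), by have := j.isLt; omega⟩).prod

/-- The MPBT operator `ρ = Σ_{i ∈ I} σ_i`. -/
def rhoOp (d a k : ℕ) : Mat d (a + k + k) :=
  ∑ v : {v : Fin k → Fin (a + k) // Function.Injective v}, sigmaOp d a k v.1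

/-- `P⁺_{A_i,C}`, tensored with the identity on the remaining ports. -/
def PplusTuple (d a k : ℕ) (v : Fin k → Fin (a + k)) : Mat d (a + k + k) :=
  ((List.finRange k).map fun j : Fin k =>
    Pplus d (a + k + k) (Fin.castLE (Nat.le_add_right (a + k) k) (v j))
      ⟨a + k + (j : ℕ), by have := j.isLt; omega⟩).prod

/-- The increasing enumeration of the ports not appearing in `v`. -/
def compEnum {a k : ℕ} (v : Fin k → Fin (a + k)) (hv : Function.Injective v) :
    Fin a → Fin (a + k) := fun i =>
  (((Finset.image v Finset.univ)ᶜ.orderIsoOfFin (by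
      rw [Finset.card_compl, Finset.card_image_of_injective _ hv, Finset.card_univ,
        Fintype.card_fin, Fintype.card_fin]
      omega)) i).1

/-- Placement of an operator on the tensor factors enumerated by `w`,
tensored with the identity on the remaining factors. -/
def placeOp {d a n : ℕ} (w : Fin a → Fin n) (X : Mat d a) : Mat d n :=
  Matrix.of fun f g =>
    if ∀ i : Fin n, (∀ j, w j ≠ i) → f i = g i
    then X (fun j => f (w j)) (fun j => g (w j)) else 0

/-- `U^{⊗N} ⊗ Ū^{⊗k}`. -/
def Upow (d N k : ℕ) (U : Matrix (Fin d) (Fin d) ℂ) : Mat d (N + k) :=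
  Matrix.of fun f g =>
    ∏ i : Fin (N + k),
      if (i : ℕ) < N then U (f i) (g i) else (starRingEnd ℂ) (U (f i) (g i))

/-- A family of concrete unitary irreps of a subgroup `H ⊆ S(n)`. -/
structure SubIrrepFamily (n : ℕ) (H : Subgroup (Equiv.Perm (Fin n))) where
  Label : Type
  [instFintype : Fintype Label]
  [instDecEq : DecidableEq Label]
  dim : Label → ℕ
  rep : ∀ ℓ, H →* Matrix (Fin (dim ℓ)) (Fin (dim ℓ)) ℂ
  irrep : ∀ ℓ, IsUnitaryIrrep (rep ℓ)

attribute [instance] SubIrrepFamily.instFintype SubIrrepFamily.instDecEq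

/-- An irrep of `S(n)` whose basis is adapted to the subgroup `H` (PRIR form). -/
structure PRIRSubData (n : ℕ) (H : Subgroup (Equiv.Perm (Fin n)))
    (Ψ : SubIrrepFamily n H) (e : ℕ) where
  rep : Equiv.Perm (Fin n) →* Matrix (Fin e) (Fin e) ℂ
  irrep : IsUnitaryIrrep rep
  Path : Type
  [instFintypePath : Fintype Path]
  [instDecEqPath : DecidableEq Path]
  endOf : Path → Ψ.Label
  basis : ((r : Path) × Fin (Ψ.dim (endOf r))) ≃ Fin e
  block_diag : ∀ (h : H) (r : Path) (l l' : Fin (Ψ.dim (endOf r))),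
      rep (h : Equiv.Perm (Fin n)) (basis ⟨r, l⟩) (basis ⟨r, l'⟩) = Ψ.rep (endOf r) h l l'
  block_off : ∀ (h : H) (r r' : Path), r ≠ r' →
      ∀ (l : Fin (Ψ.dim (endOf r))) (l' : Fin (Ψ.dim (endOf r'))),
      rep (h : Equiv.Perm (Fin n)) (basis ⟨r, l⟩) (basis ⟨r', l'⟩) = 0

attribute [instance] PRIRSubData.instFintypePath PRIRSubData.instDecEqPath

/-- A family of pairwise non-isomorphic irreps of `S(n)` in PRIR form relative to `H`. -/
structure PRIRSubFamily (n : ℕ) (H : Subgroup (Equiv.Perm (Fin n)))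
    (Ψ : SubIrrepFamily n H) where
  Label : Type
  [instFintype : Fintype Label]
  [instDecEq : DecidableEq Label]
  dim : Label → ℕ
  prir : ∀ ℓ, PRIRSubData n H Ψ (dim ℓ)
  noniso : ∀ ℓ ℓ', ℓ ≠ ℓ' → ∀ T : Matrix (Fin (dim ℓ)) (Fin (dim ℓ')) ℂ,
      (∀ σ, (prir ℓ).rep σ * T = T * (prir ℓ').rep σ) → T = 0

attribute [instance] PRIRSubFamily.instFintype PRIRSubFamily.instDecEq

end

/-!
Both sides lie in the span of the permutation operators `V_σ`, `σ ∈ S(m-k)`, on which the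
pairing `X ↦ tr (X V_σ)` is nondegenerate (`tr (X Xᴴ) = 0` forces `X = 0`), so it suffices to
compare these traces. The partial trace is dual to tensoring with the identity, so
`tr ((tr_{last k} P_μ) V_σ) = tr (P_μ V_σ) = m_μ χ_μ(σ)` by Schur's lemma, and the PRIR block
structure splits `χ_μ` on `S(m-k)` as `Σ_β m_{μ/β} χ_β`; likewise `tr (P_β V_σ) = m_β χ_β(σ)`.
The factor `m_μ / m_β` cannot hit a junk division: if `m_β = 0` for some `β` occurring in `μ`,
then `P_β = 0`, and pairing `tr_{last k} P_μ` with `P_β` forces `m_μ = 0`.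
-/

open Equiv

section PermutationOperators

variable {d n : ℕ}

lemma Vperm_mul (σ π : Perm (Fin n)) : Vperm d n σ * Vperm d n π = Vperm d n (σ * π) := by
  ext f h
  simp only [Matrix.mul_apply, Vperm, Matrix.of_apply, ite_mul, one_mul, zero_mul,
    Finset.sum_ite_eq, Finset.mem_univ, if_true]
  rfl

lemma Vperm_one : Vperm d n 1 = 1 := by
  ext f g
  simp [Vperm, Matrix.one_apply]

lemma Vperm_conjTranspose (σ : Perm (Fin n)) : (Vperm d n σ)ᴴ = Vperm d n σ⁻¹ := by
  ext f g
  have : g ∘ σ = f ↔ f ∘ ⇑σ⁻¹ = g := by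
    rw [Perm.inv_def, Equiv.comp_symm_eq, eq_comm]
  simp only [conjTranspose_apply, Vperm, Matrix.of_apply, this]
  split_ifs <;> simp

lemma trace_Vperm_conj (σ π : Perm (Fin n)) :
    trace (Vperm d n (σ⁻¹ * π * σ)) = trace (Vperm d n π) := by
  rw [← Vperm_mul, ← Vperm_mul, trace_mul_cycle, Vperm_mul, Vperm_mul, mul_inv_cancel, one_mul]

def permSpan (d n : ℕ) : Submodule ℂ (Mat d n) :=
  Submodule.span ℂ (Set.range (Vperm d n))

lemma Vperm_mem_permSpan (σ : Perm (Fin n)) : Vperm d n σ ∈ permSpan d n :=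
  Submodule.subset_span ⟨σ, rfl⟩

lemma conjTranspose_mem_permSpan {X : Mat d n} (hX : X ∈ permSpan d n) :
    Xᴴ ∈ permSpan d n := by
  obtain ⟨c, rfl⟩ := (Submodule.mem_span_range_iff_exists_fun ℂ).mp hX
  rw [conjTranspose_sum]
  refine Submodule.sum_mem _ fun σ _ => ?_
  rw [conjTranspose_smul, Vperm_conjTranspose]
  exact Submodule.smul_mem _ _ (Vperm_mem_permSpan _)

lemma trace_mul_eq_zero_of_mem_permSpan {X Y : Mat d n}
    (h : ∀ σ, trace (X * Vperm d n σ) = 0) (hY : Y ∈ permSpan d n) : trace (X * Y) = 0 := by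
  have : permSpan d n ≤ LinearMap.ker ((traceLinearMap _ ℂ ℂ).comp (LinearMap.mulLeft ℂ X)) :=
    Submodule.span_le.mpr (Set.range_subset_iff.mpr h)
  exact this hY

lemma eq_of_trace_mul_Vperm_eq {X Y : Mat d n} (hX : X ∈ permSpan d n) (hY : Y ∈ permSpan d n)
    (h : ∀ σ, trace (X * Vperm d n σ) = trace (Y * Vperm d n σ)) : X = Y := by
  have hXY := conjTranspose_mem_permSpan (Submodule.sub_mem _ hX hY)
  rw [← sub_eq_zero, ← trace_mul_conjTranspose_self_eq_zero_iff]
  exact trace_mul_eq_zero_of_mem_permSpan (fun σ => by rw [sub_mul, trace_sub, h, sub_self]) hXY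

end PermutationOperators

section UnitaryCharacters

open scoped Kronecker

variable {G : Type*} [Group G] {ι κ : Type*} [Fintype ι] [DecidableEq ι]
  [Fintype κ] [DecidableEq κ]

lemma map_inv_eq_conjTranspose (φ : G →* Matrix ι ι ℂ) (hφ : ∀ g, (φ g)ᴴ * φ g = 1) (g : G) :
    φ g⁻¹ = (φ g)ᴴ := by
  rw [← mul_one (φ g)ᴴ, ← map_one φ, ← mul_inv_cancel g, map_mul, ← mul_assoc, hφ, one_mul]

variable [Fintype G]

/-- The average of a unitary representation is an orthogonal projection, hence has
nonnegative trace. -/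
lemma sum_trace_nonneg (ρ : G →* Matrix ι ι ℂ) (hρ : ∀ g, (ρ g)ᴴ = ρ g⁻¹) :
    0 ≤ ∑ g, trace (ρ g) := by
  set C := ∑ g, ρ g
  have hCC : C * C = (Fintype.card G : ℂ) • C := by
    simp only [C, Finset.sum_mul_sum, ← map_mul]
    rw [Finset.sum_congr rfl fun g _ =>
        (Fintype.sum_equiv (Equiv.mulLeft g) _ _ fun _ => rfl : ∑ h, ρ (g * h) = ∑ h, ρ h),
      Finset.sum_const, Finset.card_univ, Nat.cast_smul_eq_nsmul]
  have hC : Cᴴ = C := by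
    simp only [C, conjTranspose_sum, hρ]
    exact Fintype.sum_equiv (Equiv.inv G) _ _ fun _ => rfl
  have htrace : ∑ g, trace (ρ g) = ((Fintype.card G : ℝ)⁻¹ : ℝ) * trace (C * Cᴴ) := by
    rw [← trace_sum]
    change trace C = _
    rw [hC, hCC, trace_smul, smul_eq_mul]
    push_cast
    field_simp
  rw [htrace]
  exact mul_nonneg (Complex.zero_le_real.mpr (by positivity))
    (posSemidef_self_mul_conjTranspose C).trace_nonneg

lemma sum_trace_inv_mul_trace_nonneg (ψ : G →* Matrix ι ι ℂ) (ψ' : G →* Matrix κ κ ℂ)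
    (hψ : ∀ g, (ψ g)ᴴ * ψ g = 1) (hψ' : ∀ g, (ψ' g)ᴴ * ψ' g = 1) :
    0 ≤ ∑ g, trace (ψ g⁻¹) * trace (ψ' g) := by
  let ρ : G →* Matrix (ι × κ) (ι × κ) ℂ :=
    { toFun g := (ψ g⁻¹)ᵀ ⊗ₖ ψ' g
      map_one' := by simp
      map_mul' g h := by simp [← mul_kronecker_mul, _root_.mul_inv_rev, transpose_mul] }
  have hρ : ∀ g, (ρ g)ᴴ = ρ g⁻¹ := fun g => by
    simp [ρ, conjTranspose_kronecker, conjTranspose_transpose_eq_transpose_conjTranspose,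
      ← map_inv_eq_conjTranspose _ hψ, ← map_inv_eq_conjTranspose _ hψ']
  simpa [ρ, trace_kronecker, trace_transpose] using sum_trace_nonneg ρ hρ

lemma sum_trace_inv_mul_trace_self_pos [Nonempty ι] (ψ : G →* Matrix ι ι ℂ)
    (hψ : ∀ g, (ψ g)ᴴ * ψ g = 1) : 0 < ∑ g, trace (ψ g⁻¹) * trace (ψ g) := by
  have hterm : ∀ g, trace (ψ g⁻¹) * trace (ψ g) = star (trace (ψ g)) * trace (ψ g) := fun g => by
    rw [map_inv_eq_conjTranspose ψ hψ, trace_conjTranspose]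
  simp only [hterm]
  refine Finset.sum_pos' (fun g _ => star_mul_self_nonneg _) ⟨1, Finset.mem_univ _, ?_⟩
  rw [map_one, trace_one, star_natCast]
  exact mul_pos (Nat.cast_pos.mpr Fintype.card_pos) (Nat.cast_pos.mpr Fintype.card_pos)

end UnitaryCharacters

section YoungProjector

variable {d m e : ℕ} (φ : Perm (Fin m) →* Matrix (Fin e) (Fin e) ℂ)

lemma Pop_eq_sum :
    Pop d m φ = ((e : ℂ) / m.factorial) • ∑ τ, trace (φ τ⁻¹) • Vperm d m τ := by
  simp only [Pop, Eop, ← Finset.smul_sum, trace, diag_apply, Finset.sum_smul]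
  rw [Finset.sum_comm]

lemma Pop_mem_permSpan : Pop d m φ ∈ permSpan d m := by
  rw [Pop_eq_sum]
  exact Submodule.smul_mem _ _ (Submodule.sum_mem _ fun τ _ =>
    Submodule.smul_mem _ _ (Vperm_mem_permSpan τ))

lemma trace_mul_Pop (X : Mat d m) :
    trace (X * Pop d m φ) = (e / m.factorial) * ∑ τ, trace (φ τ⁻¹) * trace (X * Vperm d m τ) := by
  simp [Pop_eq_sum, Finset.mul_sum, trace_sum]

lemma Pop_conjTranspose (hφ : ∀ g, (φ g)ᴴ * φ g = 1) : (Pop d m φ)ᴴ = Pop d m φ := by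
  rw [Pop_eq_sum, conjTranspose_smul, conjTranspose_sum]
  congr 1
  · simp
  refine Fintype.sum_equiv (Equiv.inv _) _ _ fun τ => ?_
  rw [conjTranspose_smul, Vperm_conjTranspose, Equiv.inv_apply, inv_inv,
    map_inv_eq_conjTranspose φ hφ, trace_conjTranspose, star_star]

lemma trace_Pop (hφ : ∀ g, (φ g)ᴴ * φ g = 1) : trace (Pop d m φ) = multSW d m φ * e := by
  rcases Nat.eq_zero_or_pos e with rfl | he
  · simp [Pop]
  have hreal : ((trace (Pop d m φ)).re : ℂ) = trace (Pop d m φ) := by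
    rw [← Complex.conj_eq_iff_re, starRingEnd_apply, ← trace_conjTranspose, Pop_conjTranspose φ hφ]
  rw [multSW, Complex.ofReal_div, Complex.ofReal_natCast,
    div_mul_cancel₀ _ (Nat.cast_ne_zero.mpr he.ne'), hreal]

/-- `M = Σ_π tr(V_π) φ(π⁻¹)` commutes with `φ` because `π ↦ tr V_π` is a class function, so it
is scalar by Schur's lemma; and `tr(P V_ρ)` is a multiple of `tr(φ(ρ) M)`. -/
lemma exists_trace_Pop_mul_Vperm
    (hφ : ∀ X, (∀ g, X * φ g = φ g * X) → ∃ c : ℂ, X = c • (1 : Matrix (Fin e) (Fin e) ℂ)) :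
    ∃ c : ℂ, ∀ ρ, trace (Pop d m φ * Vperm d m ρ) = c * trace (φ ρ) := by
  set M := ∑ π, trace (Vperm d m π) • φ π⁻¹
  have hM : ∀ g, M * φ g = φ g * M := fun g => by
    simp only [M, Finset.sum_mul, Finset.mul_sum, smul_mul_assoc, mul_smul_comm, ← map_mul]
    refine Fintype.sum_equiv ((Equiv.mulLeft g⁻¹).trans (Equiv.mulRight g)) _ _ fun π => ?_
    rw [Equiv.trans_apply, Equiv.coe_mulLeft, Equiv.coe_mulRight, trace_Vperm_conj,
      _root_.mul_inv_rev, _root_.mul_inv_rev, inv_inv, mul_inv_cancel_left]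
  obtain ⟨c, hc⟩ := hφ M hM
  refine ⟨(e / m.factorial) * c, fun ρ => ?_⟩
  have : ∑ τ, trace (φ τ⁻¹) * trace (Vperm d m ρ * Vperm d m τ) = trace (φ ρ * M) := by
    simp only [M, Finset.mul_sum, mul_smul_comm, ← map_mul, trace_sum, trace_smul, smul_eq_mul]
    refine Fintype.sum_equiv (Equiv.mulRight ρ) _ _ fun τ => ?_
    rw [trace_mul_comm, Vperm_mul, Equiv.coe_mulRight, _root_.mul_inv_rev, mul_inv_cancel_left,
      mul_comm]
  rw [trace_mul_comm, trace_mul_Pop, this, hc, mul_smul_comm, mul_one, trace_smul, smul_eq_mul,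
    mul_assoc]

lemma trace_Pop_mul_Vperm (hφ : IsUnitaryIrrep φ) (ρ : Perm (Fin m)) :
    trace (Pop d m φ * Vperm d m ρ) = multSW d m φ * trace (φ ρ) := by
  obtain ⟨c, hc⟩ := exists_trace_Pop_mul_Vperm (d := d) φ hφ.2
  rcases Nat.eq_zero_or_pos e with rfl | he
  · simp [Pop]
  have hc1 := hc 1
  rw [Vperm_one, mul_one, map_one, trace_one, Fintype.card_fin, trace_Pop φ hφ.1] at hc1
  rw [hc, mul_right_cancel₀ (Nat.cast_ne_zero.mpr he.ne') hc1]

lemma Pop_eq_zero_of_multSW_eq_zero (hφ : IsUnitaryIrrep φ) (h : multSW d m φ = 0) :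
    Pop d m φ = 0 :=
  eq_of_trace_mul_Vperm_eq (Pop_mem_permSpan φ) (Submodule.zero_mem _) fun σ => by
    rw [trace_Pop_mul_Vperm φ hφ, h, Matrix.zero_mul, trace_zero, Complex.ofReal_zero, zero_mul]

end YoungProjector

section PartialTrace

variable {d a b : ℕ}

lemma splice_eq_append (f : Fin a → Fin d) (t : Fin b → Fin d) : splice f t = Fin.append f t := by
  funext i
  refine Fin.addCases (fun j => ?_) (fun j => ?_) i <;> simp [splice]

lemma Fin.append_inj_iff {f g : Fin a → Fin d} {s t : Fin b → Fin d} :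
    Fin.append f s = Fin.append g t ↔ f = g ∧ s = t :=
  show Fin.appendEquiv a b (f, s) = Fin.appendEquiv a b (g, t) ↔ _ from
    (Fin.appendEquiv a b).injective.eq_iff.trans Prod.ext_iff

lemma sum_append {M : Type*} [AddCommMonoid M] (F : (Fin (a + b) → Fin d) → M) :
    ∑ x, F x = ∑ f, ∑ t, F (Fin.append f t) :=
  ((Fin.appendEquiv a b).sum_comp F).symm.trans (Fintype.sum_prod_type _)

lemma ptraceLast_apply (X : Mat d (a + b)) (f g : Fin a → Fin d) :
    ptraceLast a b X f g = ∑ t, X (Fin.append f t) (Fin.append g t) := by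
  simp [ptraceLast, splice_eq_append]

lemma extOp_append (Y : Mat d a) (f g : Fin a → Fin d) (s t : Fin b → Fin d) :
    extOp (Nat.le_add_right a b) Y (Fin.append f s) (Fin.append g t) =
      if s = t then Y f g else 0 := by
  have : (∀ i : Fin (a + b), a ≤ (i : ℕ) → Fin.append f s i = Fin.append g t i) ↔ s = t := by
    refine ⟨fun h => funext fun j => by simpa using h (Fin.natAdd a j) (by simp), ?_⟩
    rintro rfl i hi
    induction i using Fin.addCases with
    | left j => exact absurd hi (by simp)
    | right j => simp
  simp only [extOp, Matrix.of_apply, this, Fin.append_left']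

lemma trace_ptraceLast (X : Mat d (a + b)) : trace (ptraceLast a b X) = trace X := by
  simp only [trace, diag_apply, ptraceLast_apply]
  rw [sum_append]

lemma ptraceLast_mul_extOp (X : Mat d (a + b)) (Y : Mat d a) :
    ptraceLast a b (X * extOp (Nat.le_add_right a b) Y) = ptraceLast a b X * Y := by
  ext f g
  simp only [ptraceLast_apply, mul_apply, Finset.sum_mul]
  simp_rw [sum_append (M := ℂ), extOp_append, mul_ite, mul_zero, Finset.sum_ite_eq',
    Finset.mem_univ, if_true]
  exact Finset.sum_comm

lemma trace_ptraceLast_mul (X : Mat d (a + b)) (Y : Mat d a) :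
    trace (ptraceLast a b X * Y) = trace (X * extOp (Nat.le_add_right a b) Y) := by
  rw [← ptraceLast_mul_extOp, trace_ptraceLast]

lemma ptraceLast_one : ptraceLast a b (1 : Mat d (a + b)) = (d : ℂ) ^ b • 1 := by
  ext f g
  simp [ptraceLast_apply, one_apply, Fin.append_inj_iff]

lemma ptraceLast_zero (X : Mat d (a + 0)) : ptraceLast a 0 X = X := by
  ext f g
  simp only [ptraceLast_apply, Fintype.sum_unique, Fin.append_right_nil _ _ rfl]
  rfl

lemma ptraceLast_succ (X : Mat d (a + (b + 1))) :
    ptraceLast a (b + 1) X = ptraceLast a b (ptraceLast (a + b) 1 X) := by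
  ext f g
  simp only [ptraceLast_apply]
  rw [sum_append (a := b) (b := 1)]
  simp [Fin.append_assoc]

def ptraceLastLinear (d a b : ℕ) : Mat d (a + b) →ₗ[ℂ] Mat d a where
  toFun := ptraceLast a b
  map_add' X Y := by ext f g; simp [ptraceLast_apply, Finset.sum_add_distrib]
  map_smul' c X := by ext f g; simp [ptraceLast_apply, Finset.mul_sum]

end PartialTrace

section PartialTraceOfPermutations

variable {d : ℕ}

lemma append_comp_permExt {a b : ℕ} (σ : Perm (Fin a)) (f : Fin a → Fin d) (s : Fin b → Fin d) :
    Fin.append f s ∘ permExt (Nat.le_add_right a b) σ = Fin.append (f ∘ σ) s := by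
  funext i
  induction i using Fin.addCases with
  | left j =>
    have : Fin.castAdd b j = (finLtEquiv (Nat.le_add_right a b) j : Fin (a + b)) := rfl
    rw [Function.comp_apply, this, permExt, Perm.extendDomain_apply_image]
    exact (Fin.append_left f s (σ j)).trans (Fin.append_left (f ∘ σ) s j).symm
  | right j =>
    rw [Function.comp_apply, permExt, Perm.extendDomain_apply_not_subtype _ _ (by simp)]
    simp

lemma extOp_Vperm {a b : ℕ} (σ : Perm (Fin a)) :
    extOp (Nat.le_add_right a b) (Vperm d a σ) =
      Vperm d (a + b) (permExt (Nat.le_add_right a b) σ) := by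
  ext F G
  obtain ⟨f, s, rfl⟩ : ∃ f s, Fin.append f s = F := ⟨_, _, Fin.append_castAdd_natAdd⟩
  obtain ⟨g, t, rfl⟩ : ∃ g t, Fin.append g t = G := ⟨_, _, Fin.append_castAdd_natAdd⟩
  simp only [extOp_append, Vperm, Matrix.of_apply, append_comp_permExt, Fin.append_inj_iff]
  by_cases hst : s = t <;> simp [hst]

lemma exists_permExt_eq {m n : ℕ} (h : m ≤ n) (τ : Perm (Fin n))
    (hτ : ∀ i : Fin n, m ≤ (i : ℕ) → τ i = i) : ∃ σ, permExt h σ = τ := by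
  have hp : ∀ i, (τ i : ℕ) < m ↔ (i : ℕ) < m := fun i => by
    refine ⟨fun hi => ?_, fun hi => ?_⟩
    · by_contra hi'
      rw [hτ i (not_lt.mp hi')] at hi
      exact hi' hi
    · by_contra hi'
      have := τ.injective (hτ (τ i) (not_lt.mp hi'))
      rw [this] at hi'
      exact hi' hi
  refine ⟨(finLtEquiv h).symm.permCongr (τ.subtypePerm hp), ?_⟩
  refine Equiv.ext fun i => ?_
  by_cases hi : (i : ℕ) < m
  · rw [permExt, Perm.extendDomain_apply_subtype _ (finLtEquiv h) hi]
    simp [finLtEquiv, Equiv.permCongr_apply]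
  · rw [permExt, Perm.extendDomain_apply_not_subtype _ (finLtEquiv h) hi, hτ i (not_lt.mp hi)]

lemma ptraceLast_Vperm_swap (n : ℕ) (u : Fin n) :
    ptraceLast n 1 (Vperm d (n + 1) (swap (Fin.castSucc u) (Fin.last n))) = 1 := by
  ext f g
  have key : ∀ x : Fin d, Fin.snoc f x ∘ swap (Fin.castSucc u) (Fin.last n) = Fin.snoc g x ↔
      f = g ∧ x = f u := fun x => by
    constructor
    · intro h
      have hlast : f u = x := by simpa using congrFun h (Fin.last n)
      have hu : x = g u := by simpa using congrFun h (Fin.castSucc u)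
      refine ⟨funext fun j => ?_, hlast.symm⟩
      by_cases hj : j = u
      · exact hj ▸ hlast.trans hu
      · simpa [swap_apply_of_ne_of_ne, hj] using congrFun h (Fin.castSucc j)
    · rintro ⟨rfl, rfl⟩
      funext i
      induction i using Fin.lastCases with
      | last => simp
      | cast j => by_cases hj : j = u <;> simp [swap_apply_of_ne_of_ne, hj]
  rw [ptraceLast_apply, ← (Equiv.funUnique (Fin 1) (Fin d)).symm.sum_comp]
  simp only [Vperm, Matrix.of_apply, Fin.append_right_eq_snoc, Equiv.funUnique_symm_apply,
    uniqueElim_const, key, one_apply]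
  by_cases hfg : f = g <;> simp [hfg]

/-- Writing `τ = (x n) * τ'` with `τ'` fixing the last letter, `V_τ' = V_σ ⊗ 1` factors out of
the partial trace and the transposition `(x n)` traces to a scalar. -/
lemma ptraceLast_Vperm_mem_permSpan {n : ℕ} (τ : Perm (Fin (n + 1))) :
    ptraceLast n 1 (Vperm d (n + 1) τ) ∈ permSpan d n := by
  set x := τ (Fin.last n)
  obtain ⟨σ, hσ⟩ := exists_permExt_eq (Nat.le_add_right n 1) (swap x (Fin.last n) * τ)
    fun i hi => by
      obtain rfl : i = Fin.last n := Fin.ext (by have := i.isLt; simp at hi ⊢; omega)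
      simp [x]
  have hτ : Vperm d (n + 1) τ =
      Vperm d (n + 1) (swap x (Fin.last n)) * extOp (Nat.le_add_right n 1) (Vperm d n σ) := by
    rw [extOp_Vperm, hσ, Vperm_mul, swap_mul_self_mul]
  obtain ⟨c, hc⟩ : ∃ c : ℂ, ptraceLast n 1 (Vperm d (n + 1) (swap x (Fin.last n))) = c • 1 := by
    rcases Fin.eq_castSucc_or_eq_last x with ⟨u, hu⟩ | hx
    · exact ⟨1, by rw [hu, ptraceLast_Vperm_swap, one_smul]⟩
    · exact ⟨d, by rw [hx, swap_self, ← Perm.one_def, Vperm_one, ptraceLast_one, pow_one]⟩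
  rw [hτ, ptraceLast_mul_extOp, hc, smul_one_mul]
  exact Submodule.smul_mem _ _ (Vperm_mem_permSpan σ)

lemma ptraceLast_mem_permSpan {a b : ℕ} {X : Mat d (a + b)} (hX : X ∈ permSpan d (a + b)) :
    ptraceLast a b X ∈ permSpan d a := by
  induction b with
  | zero => rwa [ptraceLast_zero]
  | succ b ih =>
    rw [ptraceLast_succ]
    refine ih ?_
    have : permSpan d (a + b + 1) ≤ (permSpan d (a + b)).comap (ptraceLastLinear d (a + b) 1) :=
      Submodule.span_le.mpr (Set.range_subset_iff.mpr ptraceLast_Vperm_mem_permSpan)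
    exact this hX

end PartialTraceOfPermutations

namespace PRIRData

variable {d a k e : ℕ} {Φ : IrrepFamily a} (P : PRIRData a k Φ e)

lemma trace_rep_permExt (h : Perm (Fin a)) :
    trace (P.rep (permExt (Nat.le_add_right a k) h)) =
      ∑ β, (P.pathMult β : ℂ) * trace (Φ.rep β h) := by
  calc trace (P.rep (permExt (Nat.le_add_right a k) h))
      = ∑ r, trace (Φ.rep (P.endOf r) h) := by
        rw [trace, ← P.basis.sum_comp, Fintype.sum_sigma]
        simp only [diag_apply, P.block_diag]
        rfl
    _ = ∑ β, (P.pathMult β : ℂ) * trace (Φ.rep β h) := by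
        rw [← Fintype.sum_fiberwise P.endOf]
        refine Finset.sum_congr rfl fun β _ => ?_
        rw [Finset.sum_congr rfl fun r _ => by rw [r.2], Finset.sum_const, Finset.card_univ,
          nsmul_eq_mul, pathMult]

lemma trace_ptraceLast_Pop_mul_Vperm (g : Perm (Fin a)) :
    trace (ptraceLast a k (Pop d (a + k) P.rep) * Vperm d a g) =
      multSW d (a + k) P.rep * ∑ β, (P.pathMult β : ℂ) * trace (Φ.rep β g) := by
  rw [trace_ptraceLast_mul, extOp_Vperm, trace_Pop_mul_Vperm _ P.irrep, P.trace_rep_permExt]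

/-- Pairing `tr_{last k} P_μ` with `P_β` yields `m_μ` times a sum of nonnegative character
products in which the term of `β` itself is positive. -/
lemma multSW_eq_zero_of_pathMult_ne_zero {β : Φ.Label} (hβ : P.pathMult β ≠ 0)
    (h : multSW d a (Φ.rep β) = 0) : multSW d (a + k) P.rep = 0 := by
  have hpos : 0 < ∑ γ, (P.pathMult γ : ℂ) * ∑ g, trace (Φ.rep β g⁻¹) * trace (Φ.rep γ g) := by
    have : Nonempty (Fin (Φ.dim β)) := ⟨⟨0, Φ.dim_pos β⟩⟩
    refine Finset.sum_pos' (fun γ _ => mul_nonneg (Nat.cast_nonneg _)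
      (sum_trace_inv_mul_trace_nonneg _ _ (Φ.irrep β).1 (Φ.irrep γ).1))
      ⟨β, Finset.mem_univ _, mul_pos (Nat.cast_pos.mpr (Nat.pos_of_ne_zero hβ))
        (sum_trace_inv_mul_trace_self_pos _ (Φ.irrep β).1)⟩
  have key : trace (ptraceLast a k (Pop d (a + k) P.rep) * Pop d a (Φ.rep β)) =
      (Φ.dim β / a.factorial) * (multSW d (a + k) P.rep *
        ∑ γ, (P.pathMult γ : ℂ) * ∑ g, trace (Φ.rep β g⁻¹) * trace (Φ.rep γ g)) := by
    simp only [trace_mul_Pop, P.trace_ptraceLast_Pop_mul_Vperm, Finset.mul_sum]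
    rw [Finset.sum_comm]
    exact Finset.sum_congr rfl fun γ _ => Finset.sum_congr rfl fun g _ => by ring
  rw [Pop_eq_zero_of_multSW_eq_zero _ (Φ.irrep β) h, Matrix.mul_zero, trace_zero, eq_comm,
    mul_eq_zero, mul_eq_zero] at key
  have hc : (Φ.dim β / a.factorial : ℂ) ≠ 0 :=
    div_ne_zero (Nat.cast_ne_zero.mpr (Φ.dim_pos β).ne') (Nat.cast_ne_zero.mpr a.factorial_ne_zero)
  exact_mod_cast (key.resolve_left hc).resolve_right hpos.ne'

lemma pathMult_mul_multSW (β : Φ.Label) :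
    (P.pathMult β * (multSW d (a + k) P.rep / multSW d a (Φ.rep β))) * multSW d a (Φ.rep β) =
      P.pathMult β * multSW d (a + k) P.rep := by
  by_cases h : multSW d a (Φ.rep β) = 0
  · by_cases hβ : P.pathMult β = 0
    · simp [hβ]
    · simp [h, P.multSW_eq_zero_of_pathMult_ne_zero hβ h]
  · field_simp

end PRIRData

theorem statement_8_general (d a k : ℕ) (Φ : IrrepFamily a) (e : ℕ) (P : PRIRData a k Φ e) :
    ptraceLast a k (Pop d (a + k) P.rep)
      = ∑ β : Φ.Label,
          (((P.pathMult β : ℝ) *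
              (multSW d (a + k) P.rep / multSW d a (Φ.rep β)) : ℝ) : ℂ) •
            Pop d a (Φ.rep β) := by
  refine eq_of_trace_mul_Vperm_eq (ptraceLast_mem_permSpan (Pop_mem_permSpan _))
    (Submodule.sum_mem _ fun β _ => Submodule.smul_mem _ _ (Pop_mem_permSpan _)) fun g => ?_
  rw [P.trace_ptraceLast_Pop_mul_Vperm, Finset.sum_mul, trace_sum, Finset.mul_sum]
  refine Finset.sum_congr rfl fun β _ => ?_
  have hβ := congrArg (fun x : ℝ => (x : ℂ) * trace (Φ.rep β g)) (P.pathMult_mul_multSW (d := d) β)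
  rw [smul_mul_assoc, trace_smul, trace_Pop_mul_Vperm _ (Φ.irrep β), smul_eq_mul]
  push_cast at hβ ⊢
  linear_combination -hβ

/-- For `k ≥ 1`, `m = a + k ≥ 2k` and an irrep `φ^μ` of `S(m)` with
`m_μ ≠ 0`, the partial trace of the Young projector over the last `k` factors is
`tr_{m-k+1,…,m} P_μ = Σ_β m_{μ/β}·(m_μ/m_β)·P_β`, the sum running over the irreps
`β` of `S(m-k)` occurring in the restriction of `μ` (those with no path carry
`m_{μ/β} = 0` and contribute nothing). -/
theorem statement_8 (d a k : ℕ) (hd : 2 ≤ d) (hk : 1 ≤ k) (hka : k ≤ a)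
    (Φ : IrrepFamily a) (e : ℕ) (P : PRIRData a k Φ e)
    (hm : multSW d (a + k) P.rep ≠ 0) :
    ptraceLast a k (Pop d (a + k) P.rep)
      = ∑ β : Φ.Label,
          (((P.pathMult β : ℝ) *
              (multSW d (a + k) P.rep / multSW d a (Φ.rep β)) : ℝ) : ℂ) •
            Pop d a (Φ.rep β) :=
  statement_8_general d a k Φ e P
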